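/- For every integer t ≥ 1, the number S_c(t) of 3×3 semimagic squares all of whose entries lie strictly between 0 and t satisfies S_c(t) = 72 · Σ_{w=1}^{t−1} (t−1−w)·r_c(w), where r_c(w) is the number of reduced normalized semimagic squares whose largest entry x₁₃ equals w. -/
import Mathlib

/-- `Sc t` = number of 3×3 semimagic squares (positive entries, all nine
entries distinct, all row and column sums equal) all of whose entries lie
strictly between 0 and t. -/
noncomputable def Sc (t : ℕ) : ℕ :=
  {x : Matrix (Fin 3) (Fin 3) ℤ |
    (Function.Injective fun p : Fin 3 × Fin 3 => x p.1 p.2) ∧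
    (∃ s : ℤ, (∀ i, ∑ j, x i j = s) ∧ (∀ j, ∑ i, x i j = s)) ∧
    ∀ i j, 0 < x i j ∧ x i j < (t : ℤ)}.ncard

/-- `rc w` = number of reduced normalized 3×3 semimagic squares (nonnegative
entries, all nine entries distinct, all row and column sums equal, x₁₁ = 0,
x₁₁ < x₁₂ < x₁₃, x₁₁ < x₂₁ < x₃₁, x₁₂ < x₂₁) whose largest entry x₁₃
equals w. -/
noncomputable def rc (w : ℕ) : ℕ :=
  {x : Matrix (Fin 3) (Fin 3) ℤ |
    (∀ i j, 0 ≤ x i j) ∧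
    (Function.Injective fun p : Fin 3 × Fin 3 => x p.1 p.2) ∧
    (∃ s : ℤ, (∀ i, ∑ j, x i j = s) ∧ (∀ j, ∑ i, x i j = s)) ∧
    x 0 0 = 0 ∧ x 0 0 < x 0 1 ∧ x 0 1 < x 0 2 ∧
    x 0 0 < x 1 0 ∧ x 1 0 < x 2 0 ∧ x 0 1 < x 1 0 ∧
    x 0 2 = (w : ℤ)}.ncard


abbrev M3 := Matrix (Fin 3) (Fin 3) ℤ
abbrev GG := Equiv.Perm (Fin 3) × Equiv.Perm (Fin 3) × Bool

def act (g : GG) (x : M3) : M3 :=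
  fun i j => if g.2.2 then x (g.2.1 j) (g.1 i) else x (g.1 i) (g.2.1 j)

def invG (g : GG) : GG :=
  if g.2.2 then (g.2.1⁻¹, g.1⁻¹, true) else (g.1⁻¹, g.2.1⁻¹, false)

def compG (g h : GG) : GG :=
  if g.2.2 then (h.2.1 * g.1, h.1 * g.2.1, !h.2.2) else (h.1 * g.1, h.2.1 * g.2.1, h.2.2)

theorem act_act (g h : GG) (y : M3) : act g (act h y) = act (compG g h) y := by
  obtain ⟨σ, τ, b⟩ := g
  obtain ⟨σ', τ', b'⟩ := h
  cases b <;> cases b' <;> funext i j <;> simp [act, compG, Equiv.Perm.mul_apply]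

theorem act_one (y : M3) : act (1, 1, false) y = y := by
  funext i j; simp [act]

theorem act_invG (g : GG) (y : M3) : act (invG g) (act g y) = y := by
  obtain ⟨σ, τ, b⟩ := g
  cases b <;> funext i j <;> simp [act, invG]

theorem compG_inv_eq_one {a b : GG} (h : compG (invG a) b = (1, 1, false)) : a = b := by
  obtain ⟨σ, τ, ba⟩ := a; obtain ⟨σ', τ', bb⟩ := b
  cases ba
  · rw [show invG (σ, τ, false) = (σ⁻¹, τ⁻¹, false) from rfl,
      show compG (σ⁻¹, τ⁻¹, false) (σ', τ', bb) = (σ' * σ⁻¹, τ' * τ⁻¹, bb) from rfl,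
      Prod.mk.injEq, Prod.mk.injEq] at h
    obtain ⟨h1, h2, h3⟩ := h
    rw [mul_inv_eq_one] at h1 h2
    simp [h1, h2, h3]
  · rw [show invG (σ, τ, true) = (τ⁻¹, σ⁻¹, true) from rfl,
      show compG (τ⁻¹, σ⁻¹, true) (σ', τ', bb) = (τ' * τ⁻¹, σ' * σ⁻¹, !bb) from rfl,
      Prod.mk.injEq, Prod.mk.injEq] at h
    obtain ⟨h1, h2, h3⟩ := h
    rw [mul_inv_eq_one] at h1 h2
    have hb : bb = true := by simpa using h3
    simp [h1, h2, hb]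

def Inj9 (x : M3) : Prop := Function.Injective fun p : Fin 3 × Fin 3 => x p.1 p.2
def Magic (x : M3) : Prop := (∃ s : ℤ, (∀ i, ∑ j, x i j = s) ∧ (∀ j, ∑ i, x i j = s))
def NormP (x : M3) : Prop :=
  x 0 0 = 0 ∧ x 0 0 < x 0 1 ∧ x 0 1 < x 0 2 ∧ x 0 0 < x 1 0 ∧ x 1 0 < x 2 0 ∧ x 0 1 < x 1 0

lemma fin3 (a : Fin 3) : a = 0 ∨ a = 1 ∨ a = 2 := by omega

lemma perm3_cases {τ : Equiv.Perm (Fin 3)} (h0 : τ 0 = 0) :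
    (τ 1 = 1 ∧ τ 2 = 2) ∨ (τ 1 = 2 ∧ τ 2 = 1) := by
  have i12 : τ 1 ≠ τ 2 := fun h => by have := τ.injective h; omega
  have i01 : τ 1 ≠ 0 := fun h => by have := τ.injective (h.trans h0.symm); omega
  have i02 : τ 2 ≠ 0 := fun h => by have := τ.injective (h.trans h0.symm); omega
  rcases fin3 (τ 1) with h | h | h <;> rcases fin3 (τ 2) with h' | h' | h' <;> simp_all

lemma perm3_eq_one {τ : Equiv.Perm (Fin 3)} (h0 : τ 0 = 0) (h1 : τ 1 = 1) (h2 : τ 2 = 2) :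
    τ = 1 := by
  apply Equiv.ext; intro i
  rcases fin3 i with h | h | h <;> subst h <;> simp [h0, h1, h2]

theorem norm_act_eq_one {z : M3} (hinj : Inj9 z) (hz : NormP z)
    {k : GG} (hk : NormP (act k z)) : k = (1, 1, false) := by
  obtain ⟨z00, hlt1, hlt2, hlt3, hlt4, hlt5⟩ := hz
  have hz0 : ∀ p : Fin 3 × Fin 3, z p.1 p.2 = 0 → p = (0, 0) := by
    intro p hp
    have : (fun p : Fin 3 × Fin 3 => z p.1 p.2) p
        = (fun p : Fin 3 × Fin 3 => z p.1 p.2) ((0 : Fin 3), (0 : Fin 3)) := by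
      simpa [z00] using hp
    exact hinj this
  obtain ⟨σ, τ, b⟩ := k
  cases b
  · have ha : ∀ i j, act (σ, τ, false) z i j = z (σ i) (τ j) := fun i j => rfl
    obtain ⟨k00, klt1, klt2, klt3, klt4, klt5⟩ := hk
    simp only [ha] at k00 klt1 klt2 klt3 klt4 klt5
    have h00 := hz0 (σ 0, τ 0) k00
    have hσ0 : σ 0 = 0 := congrArg Prod.fst h00
    have hτ0 : τ 0 = 0 := congrArg Prod.snd h00
    rcases perm3_cases hτ0 with ⟨h1, h2⟩ | ⟨h1, h2⟩
    · rcases perm3_cases hσ0 with ⟨g1, g2⟩ | ⟨g1, g2⟩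
      · rw [perm3_eq_one hσ0 g1 g2, perm3_eq_one hτ0 h1 h2]
      · rw [g1, g2, hτ0] at klt4; exact absurd klt4 (not_lt.mpr hlt4.le)
    · rw [hσ0, h1, h2] at klt2; exact absurd klt2 (not_lt.mpr hlt2.le)
  · have ha : ∀ i j, act (σ, τ, true) z i j = z (τ j) (σ i) := fun i j => rfl
    obtain ⟨k00, klt1, klt2, klt3, klt4, klt5⟩ := hk
    simp only [ha] at k00 klt1 klt2 klt3 klt4 klt5
    have h00 := hz0 (τ 0, σ 0) k00
    have hτ0 : τ 0 = 0 := congrArg Prod.fst h00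
    have hσ0 : σ 0 = 0 := congrArg Prod.snd h00
    exfalso
    rcases perm3_cases hτ0 with ⟨h1, h2⟩ | ⟨h1, h2⟩
    · rcases perm3_cases hσ0 with ⟨g1, g2⟩ | ⟨g1, g2⟩
      · rw [h1, g1, hτ0, hσ0] at klt5; exact absurd klt5 (not_lt.mpr hlt5.le)
      · rw [hτ0, g1, g2] at klt4; exact absurd klt4 (not_lt.mpr hlt2.le)
    · rw [hσ0, h1, h2] at klt2; exact absurd klt2 (not_lt.mpr hlt4.le)

lemma act_inj9 (g : GG) {x : M3} (h : Inj9 x) : Inj9 (act g x) := by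
  obtain ⟨σ, τ, b⟩ := g
  intro p q e
  cases b
  · have e' : (fun p : Fin 3 × Fin 3 => x p.1 p.2) (σ p.1, τ p.2)
        = (fun p : Fin 3 × Fin 3 => x p.1 p.2) (σ q.1, τ q.2) := e
    have := h e'
    have h1 : σ p.1 = σ q.1 := congrArg Prod.fst this
    have h2 : τ p.2 = τ q.2 := congrArg Prod.snd this
    exact Prod.ext (σ.injective h1) (τ.injective h2)
  · have e' : (fun p : Fin 3 × Fin 3 => x p.1 p.2) (τ p.2, σ p.1)
        = (fun p : Fin 3 × Fin 3 => x p.1 p.2) (τ q.2, σ q.1) := e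
    have := h e'
    have h1 : τ p.2 = τ q.2 := congrArg Prod.fst this
    have h2 : σ p.1 = σ q.1 := congrArg Prod.snd this
    exact Prod.ext (σ.injective h2) (τ.injective h1)

lemma act_forall (g : GG) {x : M3} {P : ℤ → Prop} (h : ∀ i j, P (x i j)) :
    ∀ i j, P (act g x i j) := by
  intro i j
  cases hb : g.2.2 <;> simp only [act, hb, if_true, if_false] <;> apply h

lemma act_exists (g : GG) {x : M3} {v : ℤ} (h : ∃ i j, x i j = v) :
    ∃ i j, act g x i j = v := by
  obtain ⟨σ, τ, b⟩ := g
  obtain ⟨i, j, hij⟩ := h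
  cases b
  · exact ⟨σ⁻¹ i, τ⁻¹ j, by simpa [act] using hij⟩
  · exact ⟨σ⁻¹ j, τ⁻¹ i, by simpa [act] using hij⟩

lemma act_magic (g : GG) {x : M3} (h : Magic x) : Magic (act g x) := by
  obtain ⟨σ, τ, b⟩ := g
  obtain ⟨s, hr, hc⟩ := h
  cases b
  · refine ⟨s, fun i => ?_, fun j => ?_⟩
    · have : ∑ j, x (σ i) (τ j) = ∑ j, x (σ i) j := Equiv.sum_comp τ (fun j => x (σ i) j)
      simpa [act] using this.trans (hr (σ i))
    · have : ∑ i, x (σ i) (τ j) = ∑ i, x i (τ j) := Equiv.sum_comp σ (fun i => x i (τ j))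
      simpa [act] using this.trans (hc (τ j))
  · refine ⟨s, fun i => ?_, fun j => ?_⟩
    · have : ∑ j, x (τ j) (σ i) = ∑ j, x j (σ i) := Equiv.sum_comp τ (fun j => x j (σ i))
      simpa [act] using this.trans (hc (σ i))
    · have : ∑ i, x (τ j) (σ i) = ∑ i, x (τ j) i := Equiv.sum_comp σ (fun i => x (τ j) i)
      simpa [act] using this.trans (hr (τ j))

def shiftM (m : ℤ) (x : M3) : M3 := fun i j => x i j + m

lemma shift_inj9 (m : ℤ) {x : M3} (h : Inj9 x) : Inj9 (shiftM m x) := by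
  intro p q e
  have e' : x p.1 p.2 + m = x q.1 q.2 + m := e
  have h2 : x p.1 p.2 = x q.1 q.2 := by omega
  exact h h2

lemma shift_magic (m : ℤ) {x : M3} (h : Magic x) : Magic (shiftM m x) := by
  obtain ⟨s, hr, hc⟩ := h
  refine ⟨s + 3 * m, fun i => ?_, fun j => ?_⟩
  · have := hr i
    simp only [Fin.sum_univ_three, shiftM] at this ⊢
    omega
  · have := hc j
    simp only [Fin.sum_univ_three, shiftM] at this ⊢
    omega

lemma shift_shift (m : ℤ) (x : M3) : shiftM m (shiftM (-m) x) = x := by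
  funext i j; simp [shiftM]

lemma ne_entry {x : M3} (hinj : Inj9 x) {p q : Fin 3 × Fin 3} (hpq : p ≠ q) :
    x p.1 p.2 ≠ x q.1 q.2 := fun h => hpq (hinj h)

lemma pos_entry {x : M3} (hinj : Inj9 x) (hnn : ∀ i j, 0 ≤ x i j) (h00 : x 0 0 = 0) :
    ∀ p : Fin 3 × Fin 3, p ≠ ((0 : Fin 3), (0 : Fin 3)) → 0 < x p.1 p.2 := by
  intro p hp
  rcases (hnn p.1 p.2).lt_or_eq with h | h
  · exact h
  · exact absurd (ne_entry hinj hp (q := ((0 : Fin 3), (0 : Fin 3)))) (by simp [h00, ← h])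

lemma stepB {x : M3} (hinj : Inj9 x) :
    ∃ g : GG, (∀ i, act g x i 0 = x i 0) ∧ act g x 0 1 < act g x 0 2 := by
  by_cases h : x 0 1 < x 0 2
  · exact ⟨(1, 1, false), fun i => by simp [act], by simpa [act] using h⟩
  · refine ⟨(1, Equiv.swap 1 2, false), fun i => ?_, ?_⟩
    · show x _ (Equiv.swap 1 2 0) = x i 0
      rw [Equiv.swap_apply_of_ne_of_ne (by decide) (by decide)]
      rfl
    · show x ((1 : Equiv.Perm (Fin 3)) 0) (Equiv.swap 1 2 1) < x ((1 : Equiv.Perm (Fin 3)) 0) (Equiv.swap 1 2 2)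
      simp only [Equiv.Perm.one_apply, Equiv.swap_apply_left, Equiv.swap_apply_right]
      exact lt_of_le_of_ne (not_lt.mp h)
        (ne_entry hinj (p := ((0 : Fin 3), (2 : Fin 3))) (q := ((0 : Fin 3), (1 : Fin 3))) (by decide))

lemma stepC {x : M3} (hinj : Inj9 x) :
    ∃ g : GG, (∀ j, act g x 0 j = x 0 j) ∧ act g x 1 0 < act g x 2 0 := by
  by_cases h : x 1 0 < x 2 0
  · exact ⟨(1, 1, false), fun j => by simp [act], by simpa [act] using h⟩
  · refine ⟨(Equiv.swap 1 2, 1, false), fun j => ?_, ?_⟩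
    · show x (Equiv.swap 1 2 0) _ = x 0 j
      rw [Equiv.swap_apply_of_ne_of_ne (by decide) (by decide)]
      rfl
    · show x (Equiv.swap 1 2 1) ((1 : Equiv.Perm (Fin 3)) 0) < x (Equiv.swap 1 2 2) ((1 : Equiv.Perm (Fin 3)) 0)
      simp only [Equiv.Perm.one_apply, Equiv.swap_apply_left, Equiv.swap_apply_right]
      exact lt_of_le_of_ne (not_lt.mp h)
        (ne_entry hinj (p := ((2 : Fin 3), (0 : Fin 3))) (q := ((1 : Fin 3), (0 : Fin 3))) (by decide))

lemma stepD {x : M3} (hinj : Inj9 x) :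
    ∃ g : GG, ((∀ i j, act g x i j = x i j) ∨ (∀ i j, act g x i j = x j i)) ∧
      act g x 0 1 < act g x 1 0 := by
  by_cases h : x 0 1 < x 1 0
  · exact ⟨(1, 1, false), Or.inl fun i j => by simp [act], by simpa [act] using h⟩
  · refine ⟨(1, 1, true), Or.inr fun i j => by simp [act], ?_⟩
    show x 1 0 < x 0 1
    exact lt_of_le_of_ne (not_lt.mp h)
      (ne_entry hinj (p := ((1 : Fin 3), (0 : Fin 3))) (q := ((0 : Fin 3), (1 : Fin 3))) (by decide))

theorem exists_norm {y : M3} (hinj : Inj9 y) (hnn : ∀ i j, 0 ≤ y i j)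
    (h0 : ∃ i j, y i j = 0) : ∃ g : GG, NormP (act g y) := by
  classical
  obtain ⟨i0, j0, hy00⟩ := h0
  set gA : GG := (Equiv.swap 0 i0, Equiv.swap 0 j0, false) with hgA
  set x0 : M3 := act gA y with hx0
  have h00 : x0 0 0 = 0 := by
    show y (Equiv.swap 0 i0 0) (Equiv.swap 0 j0 0) = 0
    rw [Equiv.swap_apply_left, Equiv.swap_apply_left]; exact hy00
  have hinj0 : Inj9 x0 := act_inj9 _ hinj
  have hnn0 : ∀ i j, 0 ≤ x0 i j := act_forall _ hnn
  obtain ⟨gB, hB0, hB1⟩ := stepB hinj0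
  set x1 : M3 := act gB x0 with hx1
  have hinj1 : Inj9 x1 := act_inj9 _ hinj0
  have hnn1 : ∀ i j, 0 ≤ x1 i j := act_forall _ hnn0
  have h100 : x1 0 0 = 0 := by rw [hB0 0]; exact h00
  obtain ⟨gC, hC0, hC1⟩ := stepC hinj1
  set x2 : M3 := act gC x1 with hx2
  have hinj2 : Inj9 x2 := act_inj9 _ hinj1
  have hnn2 : ∀ i j, 0 ≤ x2 i j := act_forall _ hnn1
  have h200 : x2 0 0 = 0 := by rw [hC0 0]; exact h100
  have h201 : x2 0 1 < x2 0 2 := by rw [hC0 1, hC0 2]; exact hB1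
  have h210 : x2 1 0 < x2 2 0 := hC1
  obtain ⟨gD, hD0, hD1⟩ := stepD hinj2
  set x3 : M3 := act gD x2 with hx3
  have hinj3 : Inj9 x3 := act_inj9 _ hinj2
  have hnn3 : ∀ i j, 0 ≤ x3 i j := act_forall _ hnn2
  have key : x3 0 0 = 0 ∧ x3 0 1 < x3 0 2 ∧ x3 1 0 < x3 2 0 := by
    rcases hD0 with hE | hE
    · rw [hE 0 0, hE 0 1, hE 0 2, hE 1 0, hE 2 0]
      exact ⟨h200, h201, h210⟩
    · rw [hE 0 0, hE 0 1, hE 0 2, hE 1 0, hE 2 0]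
      exact ⟨h200, h210, h201⟩
  obtain ⟨k00, k01, k10⟩ := key
  have hnorm : NormP x3 :=
    ⟨k00, by rw [k00]; exact pos_entry hinj3 hnn3 k00 ((0 : Fin 3), (1 : Fin 3)) (by decide),
      k01, by rw [k00]; exact pos_entry hinj3 hnn3 k00 ((1 : Fin 3), (0 : Fin 3)) (by decide),
      k10, hD1⟩
  refine ⟨compG gD (compG gC (compG gB gA)), ?_⟩
  have : act (compG gD (compG gC (compG gB gA))) y = x3 := by
    rw [← act_act, ← act_act, ← act_act, ← hx0, ← hx1, ← hx2, ← hx3]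
  rw [this]
  exact hnorm


theorem act_pair_inj {z z' : M3} {g g' : GG} (hinjz : Inj9 z) (hz : NormP z) (hz' : NormP z')
    (he : act g z = act g' z') : g = g' ∧ z = z' := by
  have h1 : act (invG g') (act g z) = z' := by rw [he, act_invG]
  have h2 : act (compG (invG g') g) z = z' := by rw [← act_act]; exact h1
  have hk : NormP (act (compG (invG g') g) z) := by rw [h2]; exact hz'
  have hke := norm_act_eq_one hinjz hz hk
  have hg : g' = g := compG_inv_eq_one hke
  refine ⟨hg.symm, ?_⟩
  rw [← h2, hke, act_one]

theorem norm_le_02 {z : M3} (hnn : ∀ i j, 0 ≤ z i j) (hinj : Inj9 z) (hm : Magic z)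
    (hz : NormP z) : ∀ i j, z i j ≤ z 0 2 := by
  obtain ⟨s, hr, hc⟩ := hm
  have r0 := hr 0; have r1 := hr 1; have r2 := hr 2
  have c0 := hc 0; have c1 := hc 1; have c2 := hc 2
  simp only [Fin.sum_univ_three] at r0 r1 r2 c0 c1 c2
  obtain ⟨z00, l1, l2, l3, l4, l5⟩ := hz
  have pos := pos_entry hinj hnn z00
  have p01 : 0 < z 0 1 := pos ((0 : Fin 3), (1 : Fin 3)) (by decide)
  have p02 : 0 < z 0 2 := pos ((0 : Fin 3), (2 : Fin 3)) (by decide)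
  have p10 : 0 < z 1 0 := pos ((1 : Fin 3), (0 : Fin 3)) (by decide)
  have p20 : 0 < z 2 0 := pos ((2 : Fin 3), (0 : Fin 3)) (by decide)
  have p11 : 0 < z 1 1 := pos ((1 : Fin 3), (1 : Fin 3)) (by decide)
  have p12 : 0 < z 1 2 := pos ((1 : Fin 3), (2 : Fin 3)) (by decide)
  have p21 : 0 < z 2 1 := pos ((2 : Fin 3), (1 : Fin 3)) (by decide)
  have p22 : 0 < z 2 2 := pos ((2 : Fin 3), (2 : Fin 3)) (by decide)
  intro i j
  rcases fin3 i with hi | hi | hi <;> rcases fin3 j with hj | hj | hj <;> subst hi <;> subst hj <;>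
    omega

def NS (w : ℕ) : Set M3 :=
  {x | (∀ i j, 0 ≤ x i j) ∧
    (Function.Injective fun p : Fin 3 × Fin 3 => x p.1 p.2) ∧
    (∃ s : ℤ, (∀ i, ∑ j, x i j = s) ∧ (∀ j, ∑ i, x i j = s)) ∧
    x 0 0 = 0 ∧ x 0 0 < x 0 1 ∧ x 0 1 < x 0 2 ∧
    x 0 0 < x 1 0 ∧ x 1 0 < x 2 0 ∧ x 0 1 < x 1 0 ∧
    x 0 2 = (w : ℤ)}

lemma rc_eq (w : ℕ) : rc w = (NS w).ncard := rfl

def SMset (t : ℕ) : Set M3 :=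
  {x | (Function.Injective fun p : Fin 3 × Fin 3 => x p.1 p.2) ∧
    (∃ s : ℤ, (∀ i, ∑ j, x i j = s) ∧ (∀ j, ∑ i, x i j = s)) ∧
    ∀ i j, 0 < x i j ∧ x i j < (t : ℤ)}

lemma Sc_eq (t : ℕ) : Sc t = (SMset t).ncard := rfl

def ASet (w m : ℕ) : Set M3 :=
  {x | Inj9 x ∧ Magic x ∧ (∀ i j, (m : ℤ) ≤ x i j ∧ x i j ≤ (m : ℤ) + (w : ℤ)) ∧
    (∃ i j, x i j = (m : ℤ)) ∧ (∃ i j, x i j = (m : ℤ) + (w : ℤ))}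

lemma ASet_eq_image (w m : ℕ) :
    ASet w m = (fun p : GG × M3 => shiftM (m : ℤ) (act p.1 p.2)) '' (Set.univ ×ˢ NS w) := by
  ext x
  constructor
  · rintro ⟨hinj, hmagic, hbd, ⟨i1, j1, hmin⟩, ⟨i2, j2, hmax⟩⟩
    set y : M3 := shiftM (-(m : ℤ)) x with hy
    have hx : x = shiftM (m : ℤ) y := (shift_shift (m : ℤ) x).symm
    have hinjy : Inj9 y := shift_inj9 _ hinj
    have hmagy : Magic y := shift_magic _ hmagic
    have hnny : ∀ i j, 0 ≤ y i j := by
      intro i j; have := (hbd i j).1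
      show 0 ≤ x i j + -(m : ℤ)
      omega
    have h0y : ∃ i j, y i j = 0 := ⟨i1, j1, by show x i1 j1 + -(m : ℤ) = 0; omega⟩
    obtain ⟨g, hg⟩ := exists_norm hinjy hnny h0y
    set z : M3 := act g y with hz
    have hinjz : Inj9 z := act_inj9 _ hinjy
    have hmagz : Magic z := act_magic _ hmagy
    have hnnz : ∀ i j, 0 ≤ z i j := act_forall _ hnny
    have hley : ∀ i j, y i j ≤ (w : ℤ) := by
      intro i j; have := (hbd i j).2
      show x i j + -(m : ℤ) ≤ (w : ℤ)
      omega
    have hlez : ∀ i j, z i j ≤ (w : ℤ) := act_forall (P := fun v => v ≤ (w : ℤ)) _ hley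
    have hexz : ∃ i j, z i j = (w : ℤ) :=
      act_exists _ ⟨i2, j2, by show x i2 j2 + -(m : ℤ) = (w : ℤ); omega⟩
    have hmax' := norm_le_02 hnnz hinjz hmagz hg
    have h02 : z 0 2 = (w : ℤ) := by
      refine le_antisymm (hlez 0 2) ?_
      obtain ⟨i, j, hij⟩ := hexz
      calc (w : ℤ) = z i j := hij.symm
        _ ≤ z 0 2 := hmax' i j
    refine ⟨(invG g, z), ⟨Set.mem_univ _, ?_⟩, ?_⟩
    · exact ⟨hnnz, hinjz, hmagz, hg.1, hg.2.1, hg.2.2.1, hg.2.2.2.1, hg.2.2.2.2.1,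
        hg.2.2.2.2.2, h02⟩
    · show shiftM (m : ℤ) (act (invG g) z) = x
      rw [hz, act_invG, ← hx]
  · rintro ⟨⟨g, z⟩, ⟨-, hzmem⟩, rfl⟩
    obtain ⟨hnn, hinj, hmag, h00, l1, l2, l3, l4, l5, h02⟩ := hzmem
    have hNorm : NormP z := ⟨h00, l1, l2, l3, l4, l5⟩
    have hle' := norm_le_02 hnn hinj hmag hNorm
    have hlez : ∀ i j, z i j ≤ (w : ℤ) := fun i j => (hle' i j).trans_eq h02
    have hnna : ∀ i j, 0 ≤ act g z i j := act_forall (P := fun v => 0 ≤ v) _ hnn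
    have hlea : ∀ i j, act g z i j ≤ (w : ℤ) := act_forall (P := fun v => v ≤ (w : ℤ)) _ hlez
    refine ⟨shift_inj9 _ (act_inj9 _ hinj), shift_magic _ (act_magic _ hmag), ?_, ?_, ?_⟩
    · intro i j
      have h1 := hnna i j
      have h2 := hlea i j
      constructor
      · show (m : ℤ) ≤ act g z i j + (m : ℤ)
        omega
      · show act g z i j + (m : ℤ) ≤ (m : ℤ) + (w : ℤ)
        omega
    · obtain ⟨i, j, hij⟩ := act_exists g (v := (0 : ℤ)) ⟨0, 0, h00⟩
      have hij' : act g z i j = 0 := hij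
      refine ⟨i, j, ?_⟩
      show act g z i j + (m : ℤ) = (m : ℤ)
      omega
    · obtain ⟨i, j, hij⟩ := act_exists g (v := (w : ℤ)) ⟨0, 2, h02⟩
      have hij' : act g z i j = (w : ℤ) := hij
      refine ⟨i, j, ?_⟩
      show act g z i j + (m : ℤ) = (m : ℤ) + (w : ℤ)
      omega

lemma phi_injOn (w m : ℕ) :
    Set.InjOn (fun p : GG × M3 => shiftM (m : ℤ) (act p.1 p.2)) (Set.univ ×ˢ NS w) := by
  rintro ⟨g, z⟩ ⟨-, hz⟩ ⟨g', z'⟩ ⟨-, hz'⟩ he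
  have he' : act g z = act g' z' := by
    funext i j
    have h1 : act g z i j + (m : ℤ) = act g' z' i j + (m : ℤ) := congrFun (congrFun he i) j
    omega
  have hNz : NormP z := ⟨hz.2.2.2.1, hz.2.2.2.2.1, hz.2.2.2.2.2.1, hz.2.2.2.2.2.2.1,
    hz.2.2.2.2.2.2.2.1, hz.2.2.2.2.2.2.2.2.1⟩
  have hNz' : NormP z' := ⟨hz'.2.2.2.1, hz'.2.2.2.2.1, hz'.2.2.2.2.2.1, hz'.2.2.2.2.2.2.1,
    hz'.2.2.2.2.2.2.2.1, hz'.2.2.2.2.2.2.2.2.1⟩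
  obtain ⟨hg, hzz⟩ := act_pair_inj hz.2.1 hNz hNz' he'
  exact Prod.ext hg hzz


lemma finite_box (a b : ℤ) : {x : M3 | ∀ i j, a ≤ x i j ∧ x i j ≤ b}.Finite := by
  have h1 : ({r : Fin 3 → ℤ | ∀ j, a ≤ r j ∧ r j ≤ b}).Finite := by
    have hsub : {r : Fin 3 → ℤ | ∀ j, a ≤ r j ∧ r j ≤ b} ⊆
        Set.univ.pi (fun _ : Fin 3 => Set.Icc a b) := by
      intro r hr
      simp only [Set.mem_pi, Set.mem_Icc]
      exact fun j _ => hr j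
    exact (Set.Finite.pi (fun _ => Set.finite_Icc a b)).subset hsub
  have hsub : {x : M3 | ∀ i j, a ≤ x i j ∧ x i j ≤ b} ⊆
      Set.univ.pi (fun _ : Fin 3 => {r : Fin 3 → ℤ | ∀ j, a ≤ r j ∧ r j ≤ b}) :=
    fun x hx => Set.mem_pi.mpr fun i _ => fun j => hx i j
  exact (Set.Finite.pi (fun _ => h1)).subset hsub

lemma ASet_finite (w m : ℕ) : (ASet w m).Finite := by
  refine (finite_box (m : ℤ) ((m : ℤ) + (w : ℤ))).subset ?_
  rintro x ⟨-, -, hbd, -, -⟩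
  exact fun i j => hbd i j

lemma ASet_ncard (w m : ℕ) : (ASet w m).ncard = 72 * rc w := by
  rw [ASet_eq_image, Set.ncard_image_of_injOn (phi_injOn w m)]
  have h1 : ((Set.univ : Set GG) ×ˢ NS w).ncard = Nat.card (GG × ↥(NS w)) := by
    rw [← Nat.card_coe_set_eq]
    exact Nat.card_congr ((Equiv.Set.prod _ _).trans
      (Equiv.prodCongr (Equiv.Set.univ GG) (Equiv.refl _)))
  rw [h1, Nat.card_prod, Nat.card_coe_set_eq, rc_eq]
  congr 1
  rw [Nat.card_eq_fintype_card]
  simp only [Fintype.card_prod, Fintype.card_perm, Fintype.card_fin, Fintype.card_bool]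
  decide

lemma ASet_disjoint {w m w' m' : ℕ} (h : ¬(w = w' ∧ m = m')) :
    Disjoint (ASet w m) (ASet w' m') := by
  rw [Set.disjoint_left]
  rintro x ⟨-, -, hbd, ⟨i1, j1, e1⟩, ⟨i2, j2, e2⟩⟩ ⟨-, -, hbd', ⟨i1', j1', e1'⟩, ⟨i2', j2', e2'⟩⟩
  have c1 : (m : ℤ) ≤ (m' : ℤ) := by have := (hbd i1' j1').1; omega
  have c2 : (m' : ℤ) ≤ (m : ℤ) := by have := (hbd' i1 j1).1; omega
  have c3 : (m : ℤ) + (w : ℤ) ≤ (m' : ℤ) + (w' : ℤ) := by have := (hbd' i2 j2).2; omega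
  have c4 : (m' : ℤ) + (w' : ℤ) ≤ (m : ℤ) + (w : ℤ) := by have := (hbd i2' j2').2; omega
  exact h ⟨by omega, by omega⟩

lemma ncard_biUnion {ι : Type} [DecidableEq ι] (s : Finset ι) (f : ι → Set M3)
    (hfin : ∀ i ∈ s, (f i).Finite)
    (hdisj : ∀ i ∈ s, ∀ j ∈ s, i ≠ j → Disjoint (f i) (f j)) :
    (⋃ i ∈ s, f i).ncard = ∑ i ∈ s, (f i).ncard := by
  classical
  revert hfin hdisj
  induction s using Finset.induction_on with
  | empty => intro _ _; simp
  | @insert a s ha ih =>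
    intro hfin hdisj
    rw [Finset.set_biUnion_insert]
    have hd : Disjoint (f a) (⋃ i ∈ s, f i) := by
      rw [Set.disjoint_iUnion_right]
      intro i
      rw [Set.disjoint_iUnion_right]
      intro hi
      exact hdisj a (Finset.mem_insert_self a s) i (Finset.mem_insert_of_mem hi)
        (fun he => ha (he ▸ hi))
    have hf1 : (f a).Finite := hfin a (Finset.mem_insert_self a s)
    have hf2 : (⋃ i ∈ s, f i).Finite :=
      Set.Finite.biUnion s.finite_toSet (fun i hi => hfin i (Finset.mem_insert_of_mem hi))
    rw [Set.ncard_union_eq hd hf1 hf2, Finset.sum_insert ha,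
      ih (fun i hi => hfin i (Finset.mem_insert_of_mem hi))
        (fun i hi j hj hne => hdisj i (Finset.mem_insert_of_mem hi) j
          (Finset.mem_insert_of_mem hj) hne)]

lemma SM_decomp (t : ℕ) :
    SMset t = ⋃ p ∈ (Finset.Ico 1 t).sigma (fun w => Finset.Ico 1 (t - w)),
      ASet p.1 p.2 := by
  ext x
  simp only [Set.mem_iUnion, Finset.mem_sigma, Finset.mem_Ico, exists_prop]
  constructor
  · rintro ⟨hinj, hmag, hbd⟩
    have hex : ∃ a b : ℤ, (∀ i j, a ≤ x i j) ∧ (∀ i j, x i j ≤ b) ∧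
        (∃ i j, x i j = a) ∧ (∃ i j, x i j = b) := by
      set E : Finset ℤ := Finset.image (fun p : Fin 3 × Fin 3 => x p.1 p.2) Finset.univ with hE
      have hne : E.Nonempty :=
        ⟨x 0 0, Finset.mem_image.mpr ⟨((0 : Fin 3), (0 : Fin 3)), Finset.mem_univ _, rfl⟩⟩
      have hmem : ∀ i j, x i j ∈ E := fun i j =>
        Finset.mem_image.mpr ⟨(i, j), Finset.mem_univ _, rfl⟩
      refine ⟨E.min' hne, E.max' hne, fun i j => E.min'_le _ (hmem i j),
        fun i j => E.le_max' _ (hmem i j), ?_, ?_⟩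
      · obtain ⟨pa, -, hpa⟩ := Finset.mem_image.mp (E.min'_mem hne)
        exact ⟨pa.1, pa.2, hpa⟩
      · obtain ⟨pb, -, hpb⟩ := Finset.mem_image.mp (E.max'_mem hne)
        exact ⟨pb.1, pb.2, hpb⟩
    obtain ⟨a, b, hle1, hle2, ⟨ia, ja, hpa'⟩, ⟨ib, jb, hpb'⟩⟩ := hex
    have ha1 : 1 ≤ a := by have := (hbd ia ja).1; omega
    have hbt : b < (t : ℤ) := by have := (hbd ib jb).2; omega
    have hab : a < b := by
      have h1 := hle1 0 0
      have h2 := hle2 0 0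
      have h3 := hle1 0 1
      have h4 := hle2 0 1
      have hne01 : x 0 0 ≠ x 0 1 :=
        ne_entry hinj (p := ((0 : Fin 3), (0 : Fin 3))) (q := ((0 : Fin 3), (1 : Fin 3)))
          (by decide)
      omega
    refine ⟨⟨(b - a).toNat, a.toNat⟩,
      ⟨⟨by show 1 ≤ (b - a).toNat; omega, by show (b - a).toNat < t; omega⟩,
        by show 1 ≤ a.toNat; omega, by show a.toNat < t - (b - a).toNat; omega⟩,
      hinj, hmag, ?_,
      ⟨ia, ja, by show x ia ja = ((a.toNat : ℕ) : ℤ); omega⟩,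
      ⟨ib, jb, by
        show x ib jb = ((a.toNat : ℕ) : ℤ) + (((b - a).toNat : ℕ) : ℤ); omega⟩⟩
    intro i j
    have h1 := hle1 i j
    have h2 := hle2 i j
    constructor
    · show ((a.toNat : ℕ) : ℤ) ≤ x i j
      omega
    · show x i j ≤ ((a.toNat : ℕ) : ℤ) + (((b - a).toNat : ℕ) : ℤ)
      omega
  · rintro ⟨⟨w, m⟩, ⟨⟨hw1, hw2⟩, hm1, hm2⟩, hinj, hmag, hbd, -, -⟩
    refine ⟨hinj, hmag, fun i j => ?_⟩
    have h1 := (hbd i j).1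
    have h2 := (hbd i j).2
    constructor <;> omega


theorem semimagic_cubic_via_reduced_normalized (t : ℕ) (ht : 1 ≤ t) :
    Sc t = 72 * ∑ w ∈ Finset.Ico 1 t, (t - 1 - w) * rc w := by
  classical
  rw [Sc_eq, SM_decomp t,
    ncard_biUnion _ _ (fun p _ => ASet_finite p.1 p.2)
      (fun p _ q _ hne => ASet_disjoint (fun hpq => hne (by
        obtain ⟨pw, pm⟩ := p
        obtain ⟨qw, qm⟩ := q
        obtain ⟨h1, h2⟩ := hpq
        subst h1; subst h2; rfl))),
    Finset.sum_sigma, Finset.mul_sum]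
  refine Finset.sum_congr rfl fun w _ => ?_
  calc ∑ m ∈ Finset.Ico 1 (t - w), (ASet w m).ncard
      = ∑ _m ∈ Finset.Ico 1 (t - w), 72 * rc w :=
        Finset.sum_congr rfl fun m _ => ASet_ncard w m
    _ = (t - w - 1) * (72 * rc w) := by
        rw [Finset.sum_const, Nat.card_Ico, smul_eq_mul]
    _ = 72 * ((t - 1 - w) * rc w) := by
        rw [show t - w - 1 = t - 1 - w from by omega]; ring
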